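/- Let F be a perfect field of characteristic 2 and 2 ≤ k ≤ n. Let π : V → V̄ be the linear map with π(e_i) = e_i for 1 ≤ i ≤ 2n and π(e_{2n+1}) = 0 (the quotient of V by the radical F·e_{2n+1} of the bilinearization of η, identified with V̄), and let ⋀^k π : ⋀^k V → ⋀^k V̄ be the induced map on k-th exterior powers. Then (⋀^k π)(W_k°) = W̄^sp_k and { w ∈ W_k° : (⋀^k π)(w) = 0 } = N̄_k. In particular W_k° / N̄_k ≅ W̄^sp_k. -/

import Mathlib

/-!
In characteristic 2 the polar form of `η` is `ς ∘ (π × π)`, and `e = e_{2n+1}` spans its radical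
with `η(e) = 1`. Hence `π` is injective on totally singular subspaces and maps them to totally
isotropic ones. Conversely, as `F` is perfect, every `y ∈ V̄` has a singular lift `y' + √η(y') e`,
and singular lifts of a basis of a totally isotropic subspace span a totally singular one. This
gives `(⋀^k π)(W_k°) = W̄^sp_k`.

For the kernel, write `v_i = σπ(v_i) + c_i e` for a linear section `σ` of `π`. Multilinearity gives
`v_1 ∧ ⋯ ∧ v_k - (⋀σπ)(v_1 ∧ ⋯ ∧ v_k) = Σ ± c_i (v_1 ∧ ⋯ v̂_i ⋯ ∧ v_k) ∧ e ∈ N̄_k`, so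
`id - ⋀σ ∘ ⋀π` maps `W_k°` into `N̄_k` and fixes `ker ⋀π`. Conversely, if `X` is totally singular
of dimension `k - 1 < n`, then `(πX)^⊥` contains a hyperbolic pair; its singular lifts `u, u'`
write `e = u + u' + (u + u' + e)` as a sum of singular vectors orthogonal to `X`, so that
`x_1 ∧ ⋯ ∧ x_{k-1} ∧ e ∈ W_k°`.
-/

open ExteriorAlgebra

noncomputable section

/-- The quadratic form `η(x) = Σ_{i=1}^n x_i x_{n+i} + x_{2n+1}²` on `F^{2n+1}`
(indices written 0-based). -/
def eta (F : Type) [Field F] (n : ℕ) (x : Fin (2 * n + 1) → F) : F :=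
  (∑ i : Fin n, x ⟨i.1, by have := i.2; omega⟩ * x ⟨n + i.1, by have := i.2; omega⟩)
    + x ⟨2 * n, by omega⟩ ^ 2

/-- `W_k°`: the span of the decomposable vectors `v_1 ∧ ⋯ ∧ v_k` where `v_1, …, v_k` is a
basis of a totally singular `k`-dimensional subspace of `F^{2n+1}`. -/
def Wcirc (F : Type) [Field F] (n k : ℕ) :
    Submodule F (ExteriorAlgebra F (Fin (2 * n + 1) → F)) :=
  Submodule.span F {w | ∃ v : Fin k → (Fin (2 * n + 1) → F),
    LinearIndependent F v ∧
    (∀ x ∈ Submodule.span F (Set.range v), eta F n x = 0) ∧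
    w = ExteriorAlgebra.ιMulti F k v}

/-- The alternating form `ς(x,y) = Σ_{i=1}^n (x_i y_{n+i} − x_{n+i} y_i)` on `F^{2n}`
(indices written 0-based). -/
def zeta (F : Type) [Field F] (n : ℕ) (x y : Fin (2 * n) → F) : F :=
  ∑ i : Fin n, (x ⟨i.1, by have := i.2; omega⟩ * y ⟨n + i.1, by have := i.2; omega⟩
    - x ⟨n + i.1, by have := i.2; omega⟩ * y ⟨i.1, by have := i.2; omega⟩)

/-- `W̄^sp_j`: the span of the decomposable vectors `v_1 ∧ ⋯ ∧ v_j` where `v_1, …, v_j` is a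
basis of a totally isotropic `j`-dimensional subspace of `F^{2n}`. -/
def Wsp (F : Type) [Field F] (n j : ℕ) :
    Submodule F (ExteriorAlgebra F (Fin (2 * n) → F)) :=
  Submodule.span F {w | ∃ v : Fin j → (Fin (2 * n) → F),
    LinearIndependent F v ∧
    (∀ x ∈ Submodule.span F (Set.range v), ∀ y ∈ Submodule.span F (Set.range v),
      zeta F n x y = 0) ∧
    w = ExteriorAlgebra.ιMulti F j v}

/-- The vector `e_{2n+1}` spanning the nucleus of `η` (0-based index `2n`). -/
def eVec (F : Type) [Field F] (n : ℕ) : Fin (2 * n + 1) → F :=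
  Pi.single (⟨2 * n, by omega⟩ : Fin (2 * n + 1)) 1

/-- The nucleus subspace `N̄_k`: the span of the vectors `x_1 ∧ ⋯ ∧ x_{k−1} ∧ e_{2n+1}`
where `x_1, …, x_{k−1}` is a basis of a totally singular `(k−1)`-dimensional subspace. -/
def Nbar (F : Type) [Field F] (n k : ℕ) :
    Submodule F (ExteriorAlgebra F (Fin (2 * n + 1) → F)) :=
  Submodule.span F {w | ∃ v : Fin (k - 1) → (Fin (2 * n + 1) → F),
    LinearIndependent F v ∧
    (∀ x ∈ Submodule.span F (Set.range v), eta F n x = 0) ∧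
    w = ExteriorAlgebra.ιMulti F (k - 1) v * ExteriorAlgebra.ι F (eVec F n)}

/-- The projection `π : V → V̄` killing `e_{2n+1}` (quotient by the radical of the
bilinearization of `η`, identified with `V̄`). -/
def proj (F : Type) [Field F] (n : ℕ) : (Fin (2 * n + 1) → F) →ₗ[F] (Fin (2 * n) → F) :=
  LinearMap.funLeft F F (Fin.castLE (by omega))

namespace AlternatingMap

variable {R M N : Type*} [CommRing R] [AddCommGroup M] [Module R M] [AddCommGroup N] [Module R N]

theorem curryLeft_apply_update_self {m : ℕ} (g : M [⋀^Fin (m + 1)]→ₗ[R] N) (x : M) (f : Fin m → M)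
    (i : Fin m) : g.curryLeft x (Function.update f i x) = 0 :=
  g.map_eq_zero_of_eq (Fin.cons x _) (by simp) (Fin.succ_ne_zero i).symm

theorem map_add_smul_eq_add_sum {m : ℕ} (g : M [⋀^Fin m]→ₗ[R] N) (f : Fin m → M) (c : Fin m → R)
    (e : M) :
    g (fun i => f i + c i • e) = g f + ∑ i, c i • g (Function.update f i e) := by
  induction m with
  | zero => simp [Subsingleton.elim (fun i => f i + c i • e) f]
  | succ m ih =>
    induction f using Fin.consCases with | cons a f => ?_
    induction c using Fin.consCases with | cons b c => ?_
    have hcons : (fun i => (Fin.cons a f : Fin (m + 1) → M) i +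
        (Fin.cons b c : Fin (m + 1) → R) i • e) = Fin.cons (a + b • e) fun i => f i + c i • e := by
      ext i; cases i using Fin.cases <;> simp
    have hcurry : g.curryLeft e (fun i => f i + c i • e) = g.curryLeft e f := by
      rw [ih]
      simp only [curryLeft_apply_update_self, smul_zero, Finset.sum_const_zero, add_zero]
    have hg : ∀ x v, g (Fin.cons x v) = g.curryLeft x v := fun _ _ => rfl
    rw [hcons, hg, map_add, map_smul, add_apply, smul_apply, hcurry, ih,
      Fin.sum_univ_succ, Fin.update_cons_zero, hg, hg]
    simp only [Fin.cons_zero, Fin.cons_succ, ← Fin.cons_update, hg]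
    abel

theorem curryLeft_apply_add_smul_self {m : ℕ} (g : M [⋀^Fin (m + 1)]→ₗ[R] N) (e : M)
    (f : Fin m → M) (c : Fin m → R) : g.curryLeft e (fun i => f i + c i • e) = g.curryLeft e f := by
  rw [map_add_smul_eq_add_sum]
  simp only [curryLeft_apply_update_self, smul_zero, Finset.sum_const_zero, add_zero]

theorem map_update_eq_smul_curryLeft {m : ℕ} (g : M [⋀^Fin (m + 1)]→ₗ[R] N) (f : Fin (m + 1) → M)
    (i : Fin (m + 1)) (x : M) :
    g (Function.update f i x) = (-1 : ℤ) ^ (i : ℕ) • g.curryLeft x (i.removeNth f) := by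
  rw [← Fin.insertNth_removeNth, map_insertNth, curryLeft_apply_apply]

end AlternatingMap

namespace ExteriorAlgebra

variable {R M : Type*} [CommRing R] [AddCommGroup M] [Module R M]

theorem ιMulti_snoc {m : ℕ} (w : Fin m → M) (y : M) :
    ιMulti R (m + 1) (Fin.snoc w y) = ιMulti R m w * ι R y := by
  rw [Fin.snoc_eq_append, ← ιMulti_mul_ιMulti]
  simp

theorem ι_mul_ιMulti {m : ℕ} (y : M) (w : Fin m → M) :
    ι R y * ιMulti R m w = (-1 : ℤ) ^ m • (ιMulti R m w * ι R y) := by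
  rw [← ιMulti_snoc, ← Fin.insertNth_last', AlternatingMap.map_insertNth, smul_smul, ← pow_add,
    Fin.val_last, ← two_mul, pow_mul, neg_one_sq, one_pow, one_smul]
  simp

theorem ιMulti_add_smul_sub {m : ℕ} (f : Fin (m + 1) → M) (c : Fin (m + 1) → R) (e : M) :
    ιMulti R (m + 1) (fun i => f i + c i • e) - ιMulti R (m + 1) f =
      ∑ i : Fin (m + 1), (-1 : ℤ) ^ ((i : ℕ) + m) • c i •
        (ιMulti R m (i.removeNth fun j => f j + c j • e) * ι R e) := by
  rw [AlternatingMap.map_add_smul_eq_add_sum, add_sub_cancel_left]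
  refine Finset.sum_congr rfl fun i _ => ?_
  have hremove : (i.removeNth fun j => f j + c j • e) =
      fun j => i.removeNth f j + i.removeNth c j • e := rfl
  rw [AlternatingMap.map_update_eq_smul_curryLeft, hremove,
    ← AlternatingMap.curryLeft_apply_add_smul_self, ← hremove, ιMulti_succ_curryLeft,
    LinearMap.compAlternatingMap_apply, LinearMap.mulLeft_apply, ι_mul_ιMulti,
    ← mul_smul, ← pow_add, smul_comm]

end ExteriorAlgebra

namespace QuadraticMap

variable {R M N : Type*} [CommRing R] [AddCommGroup M] [Module R M] [AddCommGroup N] [Module R N]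

theorem eq_zero_of_mem_span (Q : QuadraticMap R M N) {s : Set M} (hQ : ∀ x ∈ s, Q x = 0)
    (hpolar : ∀ x ∈ s, ∀ y ∈ s, polar Q x y = 0) {x : M} (hx : x ∈ Submodule.span R s) :
    Q x = 0 := by
  have hpolar_span : ∀ x ∈ Submodule.span R s, ∀ y ∈ Submodule.span R s, polar Q x y = 0 := by
    have hleft (y : M) (hy : y ∈ s) : Submodule.span R s ≤ LinearMap.ker ((polarBilin Q).flip y) :=
      Submodule.span_le.2 fun x hx => hpolar x hx y hy
    intro x hx y hy
    have hright : Submodule.span R s ≤ LinearMap.ker (polarBilin Q x) :=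
      Submodule.span_le.2 fun y' hy' => hleft y' hy' hx
    exact hright hy
  induction hx using Submodule.span_induction with
  | mem x hx => exact hQ x hx
  | zero => exact Q.map_zero
  | add x y hx hy hQx hQy =>
    simpa [polar, hQx, hQy] using hpolar_span x hx y hy
  | smul a x _ hQx => rw [Q.map_smul, hQx, smul_zero]

end QuadraticMap

namespace LinearMap.BilinForm

variable {K V : Type*} [Field K] [AddCommGroup V] [Module K V] [FiniteDimensional K V]

theorem exists_mem_orthogonal_apply_eq_one {B : LinearMap.BilinForm K V} (hB : B.Nondegenerate)
    (hB₀ : B.IsRefl) {W : Submodule K V} (hW : 2 * Module.finrank K W < Module.finrank K V) :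
    ∃ u ∈ B.orthogonal W, ∃ u' ∈ B.orthogonal W, B u u' = 1 := by
  have hnot_le : ¬ B.orthogonal W ≤ W := fun hle => by
    have := Submodule.finrank_mono hle
    rw [finrank_orthogonal hB] at this
    omega
  obtain ⟨u', hu', hu'W⟩ := SetLike.not_le_iff_exists.1 hnot_le
  rw [← orthogonal_orthogonal hB hB₀ W, mem_orthogonal_iff] at hu'W
  push Not at hu'W
  obtain ⟨u, hu, hne⟩ := hu'W
  exact ⟨(B u u')⁻¹ • u, Submodule.smul_mem _ _ hu, u', hu', by simp [inv_mul_cancel₀ hne]⟩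

end LinearMap.BilinForm

section

variable {F : Type} [Field F] {n : ℕ}

variable (F n) in
def etaForm : QuadraticForm F (Fin (2 * n + 1) → F) :=
  LinearMap.BilinMap.toQuadraticMap
    ((∑ i : Fin n, (LinearMap.mul F F).compl₁₂ (LinearMap.proj ⟨i, by omega⟩)
        (LinearMap.proj ⟨n + i, by omega⟩)) +
      (LinearMap.mul F F).compl₁₂ (LinearMap.proj ⟨2 * n, by omega⟩)
        (LinearMap.proj ⟨2 * n, by omega⟩))

@[simp]
theorem etaForm_apply (x : Fin (2 * n + 1) → F) : etaForm F n x = eta F n x := by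
  simp [etaForm, eta, pow_two]

variable (F n) in
def zetaForm : LinearMap.BilinForm F (Fin (2 * n) → F) :=
  LinearMap.mk₂ F (zeta F n)
    (fun _ _ _ => by
      simp only [zeta, Pi.add_apply, ← Finset.sum_add_distrib]
      exact Finset.sum_congr rfl fun _ _ => by ring)
    (fun _ _ _ => by
      simp only [zeta, Pi.smul_apply, smul_eq_mul, Finset.mul_sum]
      exact Finset.sum_congr rfl fun _ _ => by ring)
    (fun _ _ _ => by
      simp only [zeta, Pi.add_apply, ← Finset.sum_add_distrib]
      exact Finset.sum_congr rfl fun _ _ => by ring)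
    (fun _ _ _ => by
      simp only [zeta, Pi.smul_apply, smul_eq_mul, Finset.mul_sum]
      exact Finset.sum_congr rfl fun _ _ => by ring)

@[simp]
theorem zetaForm_apply (x y : Fin (2 * n) → F) : zetaForm F n x y = zeta F n x y := rfl

@[simp]
theorem proj_apply (x : Fin (2 * n + 1) → F) (i : Fin (2 * n)) :
    proj F n x i = x ⟨i, by omega⟩ := rfl

theorem polar_etaForm [CharP F 2] (x y : Fin (2 * n + 1) → F) :
    QuadraticMap.polar (etaForm F n) x y = zeta F n (proj F n x) (proj F n y) := by
  rw [etaForm, LinearMap.BilinMap.polar_toQuadraticMap]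
  simp only [zeta, CharTwo.sub_eq_add]
  simp only [LinearMap.add_apply, LinearMap.coe_sum, Finset.sum_apply, LinearMap.compl₁₂_apply,
    LinearMap.coe_proj, Function.eval, LinearMap.mul_apply_apply, mul_comm (y _) (x _), proj_apply]
  rw [Finset.sum_add_distrib, add_add_add_comm, CharTwo.add_self_eq_zero, add_zero]

@[simp]
theorem zeta_zero_right (x : Fin (2 * n) → F) : zeta F n x 0 = 0 := (zetaForm F n x).map_zero

theorem zeta_self (x : Fin (2 * n) → F) : zeta F n x x = 0 :=
  Finset.sum_eq_zero fun _ _ => by ring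

theorem zetaForm_isRefl : (zetaForm F n).IsRefl :=
  LinearMap.IsAlt.isRefl (B := zetaForm F n) zeta_self

theorem zeta_single_add (x : Fin (2 * n) → F) (t : Fin n) :
    zeta F n x (Pi.single ⟨n + t, by omega⟩ 1) = x ⟨t, by omega⟩ := by
  have h (i : Fin n) : (i : ℕ) ≠ n + t := by omega
  simp [zeta, Pi.single_apply, Fin.val_inj, h]

theorem zeta_single (x : Fin (2 * n) → F) (t : Fin n) :
    zeta F n x (Pi.single ⟨t, by omega⟩ 1) = -x ⟨n + t, by omega⟩ := by
  have h (i : Fin n) : n + (i : ℕ) ≠ t := by omega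
  simp [zeta, Pi.single_apply, Fin.val_inj, h]

theorem zetaForm_nondegenerate : (zetaForm F n).Nondegenerate := by
  refine (LinearMap.IsRefl.nondegenerate_iff_separatingLeft (B := zetaForm F n)
    zetaForm_isRefl).2 fun x hx => ?_
  funext ⟨j, hj⟩
  by_cases hjn : j < n
  · have := hx (Pi.single ⟨n + j, by omega⟩ 1)
    rwa [zetaForm_apply, zeta_single_add x ⟨j, hjn⟩] at this
  · have hjn' : j - n < n := by omega
    have := hx (Pi.single ⟨j - n, by omega⟩ 1)
    rw [zetaForm_apply, zeta_single x ⟨j - n, hjn'⟩, neg_eq_zero] at this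
    simpa [show n + (j - n) = j by omega] using this

theorem proj_eVec : proj F n (eVec F n) = 0 := by
  funext i
  simp only [eVec, proj_apply, Pi.single_apply, Fin.ext_iff, Pi.zero_apply, ite_eq_right_iff,
    one_ne_zero, imp_false]
  omega

theorem eta_eVec : eta F n (eVec F n) = 1 := by
  have h (i : Fin n) : (i : ℕ) ≠ 2 * n := by omega
  simp [eta, eVec, Pi.single_apply, h]

theorem eq_smul_eVec_of_proj_eq_zero {x : Fin (2 * n + 1) → F} (hx : proj F n x = 0) :
    x = x ⟨2 * n, by omega⟩ • eVec F n := by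
  funext ⟨i, hi⟩
  by_cases hin : i < 2 * n
  · simpa [eVec, Pi.single_apply, hin.ne] using congrFun hx ⟨i, hin⟩
  · obtain rfl : i = 2 * n := by omega
    simp [eVec]

theorem eq_zero_of_proj_eq_zero_of_eta_eq_zero {x : Fin (2 * n + 1) → F} (hx : proj F n x = 0)
    (hη : eta F n x = 0) : x = 0 := by
  rw [eq_smul_eVec_of_proj_eq_zero hx, ← etaForm_apply, QuadraticMap.map_smul, etaForm_apply,
    eta_eVec, smul_eq_mul, mul_one, mul_self_eq_zero] at hη
  rw [eq_smul_eVec_of_proj_eq_zero hx, hη, zero_smul]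

theorem proj_surjective : Function.Surjective (proj F n) :=
  LinearMap.funLeft_surjective_of_injective _ _ _ (Fin.castLE_injective _)

theorem exists_proj_eq_eta_eq_zero [CharP F 2] [PerfectField F] (y : Fin (2 * n) → F) :
    ∃ u, proj F n u = y ∧ eta F n u = 0 := by
  obtain ⟨u, rfl⟩ := proj_surjective y
  obtain ⟨s, hs⟩ := surjective_frobenius F 2 (eta F n u)
  refine ⟨u + s • eVec F n, by simp [proj_eVec], ?_⟩
  rw [frobenius_def] at hs
  rw [← etaForm_apply, QuadraticMap.map_add (etaForm F n), QuadraticMap.map_smul]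
  simp [polar_etaForm, proj_eVec, eta_eVec, ← pow_two, hs, CharTwo.add_self_eq_zero]

theorem zeta_proj_eq_zero [CharP F 2] {U : Submodule F (Fin (2 * n + 1) → F)}
    (hU : ∀ x ∈ U, eta F n x = 0) {a b : Fin (2 * n + 1) → F} (ha : a ∈ U) (hb : b ∈ U) :
    zeta F n (proj F n a) (proj F n b) = 0 := by
  rw [← polar_etaForm, QuadraticMap.polar]
  simp [hU a ha, hU b hb, hU _ (U.add_mem ha hb)]

theorem linearIndependent_proj_comp {k : ℕ} {v : Fin k → Fin (2 * n + 1) → F}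
    (hv : LinearIndependent F v) (hsing : ∀ x ∈ Submodule.span F (Set.range v), eta F n x = 0) :
    LinearIndependent F (proj F n ∘ v) :=
  hv.map (Submodule.disjoint_def.2 fun x hx hker =>
    eq_zero_of_proj_eq_zero_of_eta_eq_zero hker (hsing x hx))

theorem map_Wcirc_le_Wsp [CharP F 2] {k : ℕ} :
    (Wcirc F n k).map (map (proj F n)).toLinearMap ≤ Wsp F n k := by
  rw [Wcirc, Submodule.map_span, Submodule.span_le]
  rintro _ ⟨_, ⟨v, hv, hsing, rfl⟩, rfl⟩
  refine Submodule.subset_span ⟨proj F n ∘ v, linearIndependent_proj_comp hv hsing, ?_, by simp⟩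
  rw [Set.range_comp, Submodule.span_image]
  rintro _ ⟨a, ha, rfl⟩ _ ⟨b, hb, rfl⟩
  exact zeta_proj_eq_zero hsing ha hb

theorem Wsp_le_map_Wcirc [CharP F 2] [PerfectField F] {k : ℕ} :
    Wsp F n k ≤ (Wcirc F n k).map (map (proj F n)).toLinearMap := by
  rw [Wsp, Submodule.span_le]
  rintro _ ⟨w, hw, hiso, rfl⟩
  choose u hu hηu using fun i => exists_proj_eq_eta_eq_zero (w i)
  have hpu : proj F n ∘ u = w := funext hu
  refine ⟨ιMulti F k u, Submodule.subset_span ⟨u, .of_comp (proj F n) (hpu ▸ hw), ?_, rfl⟩,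
    by simp [hpu]⟩
  intro x hx
  rw [← etaForm_apply]
  refine (etaForm F n).eq_zero_of_mem_span ?_ ?_ hx
  · rintro _ ⟨i, rfl⟩
    simpa using hηu i
  · rintro _ ⟨i, rfl⟩ _ ⟨j, rfl⟩
    rw [polar_etaForm, hu, hu]
    exact hiso _ (Submodule.subset_span ⟨i, rfl⟩) _ (Submodule.subset_span ⟨j, rfl⟩)

theorem Nbar_le_ker {k : ℕ} : Nbar F n k ≤ LinearMap.ker (map (proj F n)).toLinearMap := by
  rw [Nbar, Submodule.span_le]
  rintro _ ⟨x, -, -, rfl⟩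
  simp [proj_eVec]

theorem ιMulti_snoc_mem_Wcirc [CharP F 2] {m : ℕ} {x : Fin m → Fin (2 * n + 1) → F}
    (hx : ∀ y ∈ Submodule.span F (Set.range x), eta F n y = 0) {w : Fin (2 * n + 1) → F}
    (hw : eta F n w = 0)
    (hxw : proj F n w ∈ (zetaForm F n).orthogonal (Submodule.span F (Set.range (proj F n ∘ x)))) :
    ιMulti F (m + 1) (Fin.snoc x w) ∈ Wcirc F n (m + 1) := by
  by_cases hli : LinearIndependent F (Fin.snoc x w : Fin (m + 1) → Fin (2 * n + 1) → F)
  swap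
  · rw [AlternatingMap.map_linearDependent _ _ hli]
    exact zero_mem _
  refine Submodule.subset_span ⟨_, hli, fun y hy => ?_, rfl⟩
  have hxw' (i : Fin m) : zeta F n (proj F n (x i)) (proj F n w) = 0 :=
    hxw _ (Submodule.subset_span ⟨i, rfl⟩)
  rw [Fin.range_snoc] at hy
  rw [← etaForm_apply]
  refine (etaForm F n).eq_zero_of_mem_span ?_ ?_ hy
  · simp only [Set.forall_mem_insert, Set.forall_mem_range, etaForm_apply]
    exact ⟨hw, fun i => hx _ (Submodule.subset_span ⟨i, rfl⟩)⟩
  · simp only [Set.forall_mem_insert, Set.forall_mem_range, polar_etaForm]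
    exact ⟨⟨zeta_self _, fun i => zetaForm_isRefl _ _ (hxw' i)⟩, fun i => ⟨hxw' i,
      fun j => zeta_proj_eq_zero hx (Submodule.subset_span ⟨i, rfl⟩)
        (Submodule.subset_span ⟨j, rfl⟩)⟩⟩

theorem Nbar_le_Wcirc [CharP F 2] [PerfectField F] {m : ℕ} (hm : m < n) :
    Nbar F n (m + 1) ≤ Wcirc F n (m + 1) := by
  rw [Nbar, Submodule.span_le]
  rintro _ ⟨x, hx, hsing, rfl⟩
  have hdim : 2 * Module.finrank F (Submodule.span F (Set.range (proj F n ∘ x))) <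
      Module.finrank F (Fin (2 * n) → F) := by
    rw [finrank_span_eq_card (linearIndependent_proj_comp hx hsing), Fintype.card_fin,
      Module.finrank_fin_fun]
    omega
  obtain ⟨p, hp, p', hp', hpp'⟩ := LinearMap.BilinForm.exists_mem_orthogonal_apply_eq_one
    zetaForm_nondegenerate zetaForm_isRefl hdim
  obtain ⟨u, rfl, hu⟩ := exists_proj_eq_eta_eq_zero p
  obtain ⟨u', rfl, hu'⟩ := exists_proj_eq_eta_eq_zero p'
  rw [zetaForm_apply] at hpp'
  have hv : eta F n (u + u' + eVec F n) = 0 := by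
    rw [← etaForm_apply, QuadraticMap.map_add (etaForm F n), QuadraticMap.map_add (etaForm F n)]
    simp [polar_etaForm, proj_eVec, hu, hu', hpp', eta_eVec, CharTwo.add_self_eq_zero]
  have hpv : proj F n (u + u' + eVec F n) ∈
      (zetaForm F n).orthogonal (Submodule.span F (Set.range (proj F n ∘ x))) := by
    simpa [proj_eVec] using add_mem hp hp'
  have he : eVec F n = u + u' + (u + u' + eVec F n) := by
    rw [← add_assoc, CharTwo.add_self_eq_zero, zero_add]
  rw [SetLike.mem_coe, he, map_add, map_add, mul_add, mul_add, ← ιMulti_snoc, ← ιMulti_snoc,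
    ← ιMulti_snoc]
  exact add_mem (add_mem (ιMulti_snoc_mem_Wcirc hsing hu hp) (ιMulti_snoc_mem_Wcirc hsing hu' hp'))
    (ιMulti_snoc_mem_Wcirc hsing hv hpv)

theorem ιMulti_sub_map_mem_Nbar {σ : (Fin (2 * n) → F) →ₗ[F] Fin (2 * n + 1) → F}
    (hσ : proj F n ∘ₗ σ = LinearMap.id) {m : ℕ} {v : Fin (m + 1) → Fin (2 * n + 1) → F}
    (hv : LinearIndependent F v) (hsing : ∀ x ∈ Submodule.span F (Set.range v), eta F n x = 0) :
    ιMulti F (m + 1) v - map σ (map (proj F n) (ιMulti F (m + 1) v)) ∈ Nbar F n (m + 1) := by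
  set f := σ ∘ proj F n ∘ v
  set c := fun i => (v i - f i) ⟨2 * n, by omega⟩
  have hdecomp : v = fun i => f i + c i • eVec F n := funext fun i => by
    have hker : proj F n (v i - f i) = 0 := by
      rw [map_sub, sub_eq_zero]
      exact (LinearMap.congr_fun hσ _).symm
    rw [← eq_smul_eVec_of_proj_eq_zero hker, add_sub_cancel]
  have key := ιMulti_add_smul_sub f c (eVec F n)
  rw [← hdecomp] at key
  rw [map_apply_ιMulti, map_apply_ιMulti, key]
  refine Submodule.sum_mem _ fun i _ => Submodule.smul_of_tower_mem _ _ <|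
    Submodule.smul_mem _ _ <| Submodule.subset_span ⟨i.removeNth v,
      hv.comp _ Fin.succAbove_right_injective, fun y hy => hsing y ?_, rfl⟩
  exact Submodule.span_mono (Set.range_comp_subset_range _ _) hy

theorem Wcirc_inf_ker_le_Nbar {m : ℕ} :
    Wcirc F n (m + 1) ⊓ LinearMap.ker (map (proj F n)).toLinearMap ≤ Nbar F n (m + 1) := by
  obtain ⟨σ, hσ⟩ := (proj F n).exists_rightInverse_of_surjective
    (LinearMap.range_eq_top.2 proj_surjective)
  let T := LinearMap.id - (map σ).toLinearMap ∘ₗ (map (proj F n)).toLinearMap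
  have hT : Wcirc F n (m + 1) ≤ (Nbar F n (m + 1)).comap T := by
    rw [Wcirc, Submodule.span_le]
    rintro _ ⟨v, hv, hsing, rfl⟩
    exact ιMulti_sub_map_mem_Nbar hσ hv hsing
  rintro w ⟨hw, hker : map (proj F n) w = 0⟩
  simpa [T, hker] using hT hw

end

/-- Let `F` be a perfect field with `char F = 2` and `2 ≤ k ≤ n`. Then
`(⋀^k π)(W_k°) = W̄^sp_k` and `{w ∈ W_k° : (⋀^k π)(w) = 0} = N̄_k`;
in particular `W_k°/N̄_k ≅ W̄^sp_k`. -/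
theorem stmt8 (F : Type) [Field F] [CharP F 2] [PerfectField F] (n k : ℕ)
    (hk : 2 ≤ k) (hkn : k ≤ n) :
    Submodule.map (ExteriorAlgebra.map (proj F n)).toLinearMap (Wcirc F n k) = Wsp F n k ∧
    Wcirc F n k ⊓ LinearMap.ker (ExteriorAlgebra.map (proj F n)).toLinearMap = Nbar F n k := by
  obtain ⟨m, rfl⟩ : ∃ m, k = m + 1 := ⟨k - 1, by omega⟩
  exact ⟨le_antisymm map_Wcirc_le_Wsp Wsp_le_map_Wcirc,
    le_antisymm Wcirc_inf_ker_le_Nbar (le_inf (Nbar_le_Wcirc (by omega)) Nbar_le_ker)⟩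

end
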